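/- arXiv:2103.16071 — 2 statements merged into one kernel-verified Lean document; each statement's English description precedes it below -/
import Mathlib

section
/- Fix one segment s_i of S, a point x ∈ ℝᵈ not lying on s_i, and a real number r with 0 < r ≤ dist(x, s_i). Then E_i(x) ⊆ C_{s_i}(x, r) ⊆ E_i^{√2}(x), where E_i^{√2}(x) is the homothety of E_i(x) about x with ratio √2. -/
noncomputable section

open Metric Set MeasureTheory
open scoped InnerProductSpace Classical

variable {d n : ℕ}

/-- The capsule `C_s(x,r)` induced by a single segment `s = [a,b]` with unit
direction vector `v`.  If the nearest point of `s` to `x` is an endpoint, it is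
the closed ball of radius `max r (dist x s)`; otherwise it is the intersection
of the infinite closed cylinder of radius `max r (dist x s)` whose axis is the
line through `x` parallel to `v` with the closed ball of radius
`max r (min ‖x-a‖ ‖x-b‖)`. -/
def capsuleSeg (a b v x : EuclideanSpace ℝ (Fin d)) (r : ℝ) :
    Set (EuclideanSpace ℝ (Fin d)) :=
  if Metric.infDist x (segment ℝ a b) = min (dist x a) (dist x b) then
    Metric.closedBall x (max r (Metric.infDist x (segment ℝ a b)))
  else
    {y | ‖(y - x) - ⟪y - x, v⟫_ℝ • v‖ ≤ max r (Metric.infDist x (segment ℝ a b))} ∩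
      Metric.closedBall x (max r (min (dist x a) (dist x b)))

/-- The capsule `C(x,r)` of the family of segments `s i = [a i, b i]`. -/
def capsuleFam (a b v : Fin n → EuclideanSpace ℝ (Fin d))
    (x : EuclideanSpace ℝ (Fin d)) (r : ℝ) : Set (EuclideanSpace ℝ (Fin d)) :=
  ⋂ i, capsuleSeg (a i) (b i) (v i) x r

/-- Image of a set under the homothety (central scaling) centered at `x` with ratio `lam`. -/
def scaleAbout (x : EuclideanSpace ℝ (Fin d)) (lam : ℝ)
    (C : Set (EuclideanSpace ℝ (Fin d))) : Set (EuclideanSpace ℝ (Fin d)) :=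
  (AffineMap.homothety x lam) '' C

/-- Local feature size: the distance from `x` to its second-nearest segment. -/
def lfs (a b : Fin n → EuclideanSpace ℝ (Fin d)) (x : EuclideanSpace ℝ (Fin d)) : ℝ :=
  sInf {t | ∃ i j : Fin n, i < j ∧
    t = max (Metric.infDist x (segment ℝ (a i) (b i)))
            (Metric.infDist x (segment ℝ (a j) (b j)))}

/-- `D_i(x)`: half the squared distance from `x` to the segment `[a,b]`. -/
def Dseg (a b x : EuclideanSpace ℝ (Fin d)) : ℝ :=
  Metric.infDist x (segment ℝ a b) ^ 2 / 2

/-- `D•_i(x)`: half the squared distance from `x` to the nearest endpoint. -/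
def Dbullet (a b x : EuclideanSpace ℝ (Fin d)) : ℝ :=
  min (dist x a ^ 2) (dist x b ^ 2) / 2

/-- The quadratic form `w ↦ wᵀ H_i(x) w` of the local tensor
`H_i(x) = (1/D_i(x))(I - v vᵀ) + (1/D•_i(x)) v vᵀ`. -/
def tensorQ (a b v x w : EuclideanSpace ℝ (Fin d)) : ℝ :=
  (1 / Dseg a b x) * (‖w‖ ^ 2 - ⟪w, v⟫_ℝ ^ 2) + (1 / Dbullet a b x) * ⟪w, v⟫_ℝ ^ 2

/-- The local ellipsoid `E_i(x) = {y | ½ (y-x)ᵀ H_i(x) (y-x) ≤ 1}`. -/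
def localEllipsoid (a b v x : EuclideanSpace ℝ (Fin d)) :
    Set (EuclideanSpace ℝ (Fin d)) :=
  {y | tensorQ a b v x (y - x) / 2 ≤ 1}

/-- `Ê(x)`: the intersection of the local ellipsoids of all segments. -/
def hatE (a b v : Fin n → EuclideanSpace ℝ (Fin d)) (x : EuclideanSpace ℝ (Fin d)) :
    Set (EuclideanSpace ℝ (Fin d)) :=
  ⋂ i, localEllipsoid (a i) (b i) (v i) x

/-- `Ẽ(x)`: the ellipsoid of the blended tensor `H(x) = ∑ i, H_i(x)`. -/
def tildeE (a b v : Fin n → EuclideanSpace ℝ (Fin d)) (x : EuclideanSpace ℝ (Fin d)) :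
    Set (EuclideanSpace ℝ (Fin d)) :=
  {y | (∑ i, tensorQ (a i) (b i) (v i) x (y - x)) / 2 ≤ 1}

/-! With `w = y - x`, `D = dist(x, s)` and `m` the distance from `x` to the nearer endpoint,
`½ wᵀ H w = ‖w_⊥‖² / D² + ⟪w, v⟫² / m²`, where `w_⊥ = w - ⟪w, v⟫ v`. Since `D ≤ m`, the capsule
(whichever case applies) is exactly `{‖w_⊥‖ ≤ D, ‖w‖ ≤ m}`. If the form is at most `1`, both of its
summands and also `‖w‖² / m² ≤ ‖w_⊥‖² / D² + ⟪w, v⟫² / m²` are at most `1`; conversely, on the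
capsule each summand is at most `1`, so the form is at most `2`, i.e. `y` lies in the ellipsoid
scaled by `√2`. -/

section UnitVector

variable {F : Type*} [NormedAddCommGroup F] [InnerProductSpace ℝ F] {v : F}

theorem norm_sub_inner_smul_sq (hv : ‖v‖ = 1) (w : F) :
    ‖w - ⟪w, v⟫_ℝ • v‖ ^ 2 = ‖w‖ ^ 2 - ⟪w, v⟫_ℝ ^ 2 := by
  rw [norm_sub_sq_real, real_inner_smul_right, norm_smul, Real.norm_eq_abs, hv,
    real_inner_comm]
  ring_nf
  rw [sq_abs]
  ring

theorem norm_sub_inner_smul_le (hv : ‖v‖ = 1) (w : F) : ‖w - ⟪w, v⟫_ℝ • v‖ ≤ ‖w‖ := by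
  refine pow_le_pow_iff_left₀ (norm_nonneg _) (norm_nonneg _) two_ne_zero |>.mp ?_
  rw [norm_sub_inner_smul_sq hv]
  linarith [sq_nonneg ⟪w, v⟫_ℝ]

theorem norm_sub_inner_smul_le_and_norm_le_of_quadForm_le_one (hv : ‖v‖ = 1) {D m : ℝ}
    (hD : 0 < D) (hDm : D ≤ m) {w : F}
    (hw : (‖w‖ ^ 2 - ⟪w, v⟫_ℝ ^ 2) / D ^ 2 + ⟪w, v⟫_ℝ ^ 2 / m ^ 2 ≤ 1) :
    ‖w - ⟪w, v⟫_ℝ • v‖ ≤ D ∧ ‖w‖ ≤ m := by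
  have hm : 0 < m := hD.trans_le hDm
  have hperp_nonneg : 0 ≤ ‖w‖ ^ 2 - ⟪w, v⟫_ℝ ^ 2 := by
    rw [← norm_sub_inner_smul_sq hv]; positivity
  have haxial_nonneg : 0 ≤ ⟪w, v⟫_ℝ ^ 2 / m ^ 2 := by positivity
  constructor
  · refine pow_le_pow_iff_left₀ (norm_nonneg _) hD.le two_ne_zero |>.mp ?_
    rw [norm_sub_inner_smul_sq hv, ← div_le_one (by positivity)]
    linarith
  · have hperp : (‖w‖ ^ 2 - ⟪w, v⟫_ℝ ^ 2) / m ^ 2 ≤ (‖w‖ ^ 2 - ⟪w, v⟫_ℝ ^ 2) / D ^ 2 := by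
      gcongr
    refine pow_le_pow_iff_left₀ (norm_nonneg _) hm.le two_ne_zero |>.mp ?_
    rw [← div_le_one (by positivity)]
    calc ‖w‖ ^ 2 / m ^ 2
        = (‖w‖ ^ 2 - ⟪w, v⟫_ℝ ^ 2) / m ^ 2 + ⟪w, v⟫_ℝ ^ 2 / m ^ 2 := by ring
      _ ≤ 1 := by linarith

theorem quadForm_le_two_of_norm_sub_inner_smul_le_of_norm_le (hv : ‖v‖ = 1) {D m : ℝ}
    (hD : 0 < D) (hm : 0 < m) {w : F} (hperp : ‖w - ⟪w, v⟫_ℝ • v‖ ≤ D) (hw : ‖w‖ ≤ m) :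
    (‖w‖ ^ 2 - ⟪w, v⟫_ℝ ^ 2) / D ^ 2 + ⟪w, v⟫_ℝ ^ 2 / m ^ 2 ≤ 2 := by
  have hperp' : (‖w‖ ^ 2 - ⟪w, v⟫_ℝ ^ 2) / D ^ 2 ≤ 1 := by
    rw [div_le_one (by positivity), ← norm_sub_inner_smul_sq hv]
    gcongr
  have haxial : ⟪w, v⟫_ℝ ^ 2 / m ^ 2 ≤ 1 := by
    rw [div_le_one (by positivity), ← sq_abs]
    have := abs_real_inner_le_norm w v
    rw [hv, mul_one] at this
    gcongr
    exact this.trans hw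
  linarith

end UnitVector

section Segment

variable {a b v x : EuclideanSpace ℝ (Fin d)}

theorem infDist_segment_pos (hx : x ∉ segment ℝ a b) : 0 < infDist x (segment ℝ a b) := by
  have hclosed : IsClosed (segment ℝ a b) := by
    rw [← convexHull_pair]
    exact ((toFinite {a, b}).isCompact_convexHull ℝ).isClosed
  exact (hclosed.notMem_iff_infDist_pos ⟨a, left_mem_segment ℝ a b⟩).mp hx

theorem infDist_segment_le_min_dist :
    infDist x (segment ℝ a b) ≤ min (dist x a) (dist x b) :=
  le_min (infDist_le_dist_of_mem (left_mem_segment ℝ a b))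
    (infDist_le_dist_of_mem (right_mem_segment ℝ a b))

theorem Dbullet_eq : Dbullet a b x = min (dist x a) (dist x b) ^ 2 / 2 := by
  rcases le_total (dist x a) (dist x b) with h | h <;>
    simp [Dbullet, h, pow_le_pow_left₀ dist_nonneg h]

theorem tensorQ_div_two_eq (w : EuclideanSpace ℝ (Fin d)) :
    tensorQ a b v x w / 2 =
      (‖w‖ ^ 2 - ⟪w, v⟫_ℝ ^ 2) / infDist x (segment ℝ a b) ^ 2 +
        ⟪w, v⟫_ℝ ^ 2 / min (dist x a) (dist x b) ^ 2 := by
  rw [tensorQ, Dbullet_eq, Dseg]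
  ring

theorem tensorQ_smul (c : ℝ) (w : EuclideanSpace ℝ (Fin d)) :
    tensorQ a b v x (c • w) = c ^ 2 * tensorQ a b v x w := by
  simp only [tensorQ, norm_smul, real_inner_smul_left, mul_pow, Real.norm_eq_abs, sq_abs]
  ring

theorem mem_scaleAbout_localEllipsoid_iff {c : ℝ} (hc : c ≠ 0) {y : EuclideanSpace ℝ (Fin d)} :
    y ∈ scaleAbout x c (localEllipsoid a b v x) ↔ tensorQ a b v x (y - x) / 2 ≤ c ^ 2 := by
  have hinv : AffineMap.homothety x c (AffineMap.homothety x c⁻¹ y) = y := by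
    rw [← AffineMap.homothety_mul_apply, mul_inv_cancel₀ hc, AffineMap.homothety_one,
      AffineMap.id_apply]
  have hsub : ∀ (t : ℝ) z, AffineMap.homothety x t z - x = t • (z - x) := fun t z => by
    simp [AffineMap.homothety_apply]
  constructor
  · rintro ⟨z, hz, rfl⟩
    rw [hsub, tensorQ_smul]
    have hz' : tensorQ a b v x (z - x) / 2 ≤ 1 := hz
    nlinarith [sq_nonneg c]
  · intro hy
    refine ⟨_, ?_, hinv⟩
    change tensorQ a b v x (AffineMap.homothety x c⁻¹ y - x) / 2 ≤ 1
    rw [hsub, tensorQ_smul]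
    calc c⁻¹ ^ 2 * tensorQ a b v x (y - x) / 2 = tensorQ a b v x (y - x) / 2 / c ^ 2 := by
          rw [inv_pow]; ring
      _ ≤ 1 := (div_le_one (by positivity)).mpr hy

theorem capsuleSeg_eq (hv : ‖v‖ = 1) {r : ℝ} (hr : r ≤ infDist x (segment ℝ a b)) :
    capsuleSeg a b v x r =
      {y | ‖(y - x) - ⟪y - x, v⟫_ℝ • v‖ ≤ infDist x (segment ℝ a b) ∧
        ‖y - x‖ ≤ min (dist x a) (dist x b)} := by
  have hm : r ≤ min (dist x a) (dist x b) := hr.trans infDist_segment_le_min_dist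
  ext y
  unfold capsuleSeg
  split_ifs with hDm
  · -- the cylinder of radius `D` already contains the ball of radius `D`
    rw [max_eq_right hr, mem_closedBall, dist_eq_norm, mem_ofPred_eq, ← hDm]
    exact ⟨fun h => ⟨(norm_sub_inner_smul_le hv _).trans h, h⟩, And.right⟩
  · rw [max_eq_right hr, max_eq_right hm, mem_inter_iff, mem_closedBall, dist_eq_norm]
    rfl

end Segment

theorem localEllipsoid_subset_capsuleSeg_subset_scaled_general {d : ℕ}
    (a b v : EuclideanSpace ℝ (Fin d))
    (hv : ‖v‖ = 1)
    (x : EuclideanSpace ℝ (Fin d)) (hx : x ∉ segment ℝ a b)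
    (r : ℝ) (hr : r ≤ Metric.infDist x (segment ℝ a b)) :
    localEllipsoid a b v x ⊆ capsuleSeg a b v x r ∧
      capsuleSeg a b v x r ⊆ scaleAbout x (Real.sqrt 2) (localEllipsoid a b v x) := by
  have hD := infDist_segment_pos hx
  have hDm : infDist x (segment ℝ a b) ≤ min (dist x a) (dist x b) :=
    infDist_segment_le_min_dist
  rw [capsuleSeg_eq hv hr]
  constructor
  · intro y hy
    refine norm_sub_inner_smul_le_and_norm_le_of_quadForm_le_one hv hD hDm ?_
    rw [← tensorQ_div_two_eq]
    exact hy
  · rintro y ⟨hperp, hy⟩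
    rw [mem_scaleAbout_localEllipsoid_iff (Real.sqrt_ne_zero'.mpr two_pos),
      Real.sq_sqrt zero_le_two, tensorQ_div_two_eq]
    exact quadForm_le_two_of_norm_sub_inner_smul_le_of_norm_le hv hD (hD.trans_le hDm) hperp hy

/-- For a single segment `s_i = [a,b]`, a point `x` not on it,
and `0 < r ≤ dist(x, s_i)`, `E_i(x) ⊆ C_{s_i}(x, r) ⊆ E_i^{√2}(x)`. -/
theorem localEllipsoid_subset_capsuleSeg_subset_scaled {d : ℕ} (hd : 1 ≤ d)
    (a b v : EuclideanSpace ℝ (Fin d))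
    (hab : a ≠ b)
    (hv : ‖v‖ = 1)
    (hdir : b - a = ‖b - a‖ • v)
    (x : EuclideanSpace ℝ (Fin d)) (hx : x ∉ segment ℝ a b)
    (r : ℝ) (hr0 : 0 < r) (hr : r ≤ Metric.infDist x (segment ℝ a b)) :
    localEllipsoid a b v x ⊆ capsuleSeg a b v x r ∧
      capsuleSeg a b v x r ⊆ scaleAbout x (Real.sqrt 2) (localEllipsoid a b v x) :=
  localEllipsoid_subset_capsuleSeg_subset_scaled_general a b v hv x hx r hr
end
end

section
/- (Single-segment Expansion-Containment) Let s be a single closed line segment in ℝᵈ, let r > 0 and 0 < λ < 1, and set α = (3+λ)/(1−λ). For any x, y ∈ ℝᵈ, if C_s^λ(x, r) ∩ C_s^λ(y, r) ≠ ∅, then C_s^λ(y, r) ⊆ C_s^{αλ}(x, r). -/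
noncomputable section

open Metric Set MeasureTheory
open scoped InnerProductSpace Classical

variable {d n : ℕ}

/-!
The capsule `C_s(x, r)` is exactly the set of points within `ballRadius` of `x` whose
projections onto `v⟂` lie within `cylRadius` of that of `x` (in the ball case the two radii
agree). Both conditions obey the triangle inequality, so it suffices to show that for a common
point `z` of the two shrunk capsules each radius `ρ` satisfies `(1 - λ) ρ(y) ≤ (1 + λ) ρ(x)`.
For `ballRadius` this holds because it is `1`-Lipschitz. For `cylRadius` the key point is that
when the foot of `x` on the line is interior to `s`, `C_s(x, r)` lies in the `cylRadius`
neighbourhood of the translate of `s` through `x`, so `dist(z, s) ≤ dist(x, s) + λ ρ(x)`.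
-/

section Metric

variable {X : Type*} [PseudoMetricSpace X]

def ballRadius (a b x : X) (r : ℝ) : ℝ := max r (min (dist x a) (dist x b))

theorem ballRadius_le_add_dist (a b x y : X) (r : ℝ) :
    ballRadius a b y r ≤ ballRadius a b x r + dist x y := by
  have hmin : min (dist y a) (dist y b) ≤ min (dist x a) (dist x b) + dist x y := by
    rw [add_comm, ← min_add_add_left]
    exact min_le_min (dist_triangle_left y a x) (dist_triangle_left y b x)
  exact max_le (le_add_of_le_of_nonneg (le_max_left _ _) dist_nonneg)
    (hmin.trans (add_le_add_left (le_max_right _ _) _))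

end Metric

section InnerProductSpace

variable {E : Type*} [NormedAddCommGroup E] [InnerProductSpace ℝ E]

def perpProj (v : E) : E →ₗ[ℝ] E := LinearMap.id - (innerₗ E v).smulRight v

variable {v : E}

theorem perpProj_apply (v u : E) : perpProj v u = u - ⟪u, v⟫_ℝ • v := by
  simp [perpProj, real_inner_comm]

theorem perpProj_self (hv : ‖v‖ = 1) : perpProj v v = 0 := by
  rw [perpProj_apply, real_inner_self_eq_norm_sq, hv, one_pow, one_smul, sub_self]

theorem norm_perpProj_sq_add_inner_sq (hv : ‖v‖ = 1) (u : E) :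
    ‖perpProj v u‖ ^ 2 + ⟪u, v⟫_ℝ ^ 2 = ‖u‖ ^ 2 := by
  have hvv : ⟪v, v⟫_ℝ = 1 := by rw [real_inner_self_eq_norm_sq, hv, one_pow]
  rw [perpProj_apply, ← real_inner_self_eq_norm_sq, ← real_inner_self_eq_norm_sq]
  simp only [inner_sub_left, inner_sub_right, real_inner_smul_left, real_inner_smul_right, hvv,
    real_inner_comm u v]
  ring

theorem norm_perpProj_le (hv : ‖v‖ = 1) (u : E) : ‖perpProj v u‖ ≤ ‖u‖ := by
  have := norm_perpProj_sq_add_inner_sq hv u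
  exact pow_le_pow_iff_left₀ (norm_nonneg _) (norm_nonneg _) two_ne_zero |>.1
    (by nlinarith [sq_nonneg ⟪u, v⟫_ℝ])

theorem norm_sub_smul_sq (hv : ‖v‖ = 1) (u : E) (t : ℝ) :
    ‖u - t • v‖ ^ 2 = ‖perpProj v u‖ ^ 2 + (⟪u, v⟫_ℝ - t) ^ 2 := by
  have hvv : ⟪v, v⟫_ℝ = 1 := by rw [real_inner_self_eq_norm_sq, hv, one_pow]
  rw [← norm_perpProj_sq_add_inner_sq hv, map_sub, map_smul, perpProj_self hv, smul_zero,
    sub_zero, inner_sub_left, real_inner_smul_left, hvv, mul_one]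

theorem dist_add_smul_sq (hv : ‖v‖ = 1) (p a : E) (t : ℝ) :
    dist p (a + t • v) ^ 2 = ‖perpProj v (p - a)‖ ^ 2 + (⟪p - a, v⟫_ℝ - t) ^ 2 := by
  rw [dist_eq_norm, ← sub_sub, norm_sub_smul_sq hv]

variable {a b : E}

theorem segment_eq_image_Icc_norm (hdir : b - a = ‖b - a‖ • v) :
    segment ℝ a b = (fun t : ℝ => a + t • v) '' Icc 0 ‖b - a‖ := by
  have hIcc : Icc 0 ‖b - a‖ = (fun θ => θ * ‖b - a‖) '' Icc 0 1 := by
    rw [image_mul_right_Icc zero_le_one (norm_nonneg _), zero_mul, one_mul]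
  rw [segment_eq_image', hIcc, image_image]
  congr 1
  funext θ
  rw [mul_smul, ← hdir]

theorem add_smul_mem_segment (hdir : b - a = ‖b - a‖ • v) {t : ℝ} (ht : t ∈ Icc 0 ‖b - a‖) :
    a + t • v ∈ segment ℝ a b := by
  rw [segment_eq_image_Icc_norm hdir]
  exact mem_image_of_mem _ ht

theorem infDist_segment_eq_dist_clamp (hv : ‖v‖ = 1) (hdir : b - a = ‖b - a‖ • v) (p : E) :
    infDist p (segment ℝ a b) = dist p (a + max 0 (min ‖b - a‖ ⟪p - a, v⟫_ℝ) • v) := by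
  have hL := norm_nonneg (b - a)
  refine le_antisymm (infDist_le_dist_of_mem (add_smul_mem_segment hdir ?_)) ?_
  · exact ⟨le_max_left _ _, max_le hL (min_le_left _ _)⟩
  rw [le_infDist ⟨a, left_mem_segment ℝ a b⟩, segment_eq_image_Icc_norm hdir]
  rintro _ ⟨t, ⟨ht0, htL⟩, rfl⟩
  refine pow_le_pow_iff_left₀ dist_nonneg dist_nonneg two_ne_zero |>.1 ?_
  rw [dist_add_smul_sq hv, dist_add_smul_sq hv, add_le_add_iff_left]
  set τ := ⟪p - a, v⟫_ℝ
  rcases le_total τ 0 with h0 | h0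
  · rw [min_eq_right (h0.trans hL), max_eq_left h0]; nlinarith
  rcases le_total τ ‖b - a‖ with h1 | h1
  · rw [min_eq_right h1, max_eq_right h0]; nlinarith
  · rw [min_eq_left h1, max_eq_right hL]; nlinarith

theorem norm_perpProj_le_infDist_segment (hv : ‖v‖ = 1) (hdir : b - a = ‖b - a‖ • v) (p : E) :
    ‖perpProj v (p - a)‖ ≤ infDist p (segment ℝ a b) := by
  rw [infDist_segment_eq_dist_clamp hv hdir]
  refine pow_le_pow_iff_left₀ (norm_nonneg _) dist_nonneg two_ne_zero |>.1 ?_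
  rw [dist_add_smul_sq hv]
  nlinarith

theorem inner_mem_Icc_of_infDist_ne_min (hv : ‖v‖ = 1) (hdir : b - a = ‖b - a‖ • v) {p : E}
    (hp : infDist p (segment ℝ a b) ≠ min (dist p a) (dist p b)) :
    ⟪p - a, v⟫_ℝ ∈ Icc 0 ‖b - a‖ ∧ infDist p (segment ℝ a b) = ‖perpProj v (p - a)‖ := by
  have hL := norm_nonneg (b - a)
  have hmin : infDist p (segment ℝ a b) ≤ min (dist p a) (dist p b) :=
    le_min (infDist_le_dist_of_mem (left_mem_segment ℝ a b))
      (infDist_le_dist_of_mem (right_mem_segment ℝ a b))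
  have hb : a + ‖b - a‖ • v = b := by rw [← hdir, add_sub_cancel]
  rw [infDist_segment_eq_dist_clamp hv hdir] at hp hmin ⊢
  set τ := ⟪p - a, v⟫_ℝ
  have h0 : 0 ≤ τ := by
    by_contra! h0
    rw [min_eq_right (h0.le.trans hL), max_eq_left h0.le, zero_smul, add_zero] at hp hmin
    exact hp (le_antisymm hmin (min_le_left _ _))
  have h1 : τ ≤ ‖b - a‖ := by
    by_contra! h1
    rw [min_eq_left h1.le, max_eq_right hL, hb] at hp hmin
    exact hp (le_antisymm hmin (min_le_right _ _))
  refine ⟨⟨h0, h1⟩, ?_⟩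
  rw [min_eq_right h1, max_eq_right h0, dist_eq_norm, perpProj_apply, sub_add_eq_sub_sub]

def cylRadius (a b x : E) (r : ℝ) : ℝ := max r (infDist x (segment ℝ a b))

theorem cylRadius_nonneg (a b x : E) (r : ℝ) : 0 ≤ cylRadius a b x r :=
  infDist_nonneg.trans (le_max_right _ _)

theorem ballRadius_eq_cylRadius {x : E} {r : ℝ}
    (h : infDist x (segment ℝ a b) = min (dist x a) (dist x b)) :
    ballRadius a b x r = cylRadius a b x r := by
  rw [ballRadius, cylRadius, h]

end InnerProductSpace

theorem exists_mem_Icc_sq_add_sq_le {τ L h g ρ : ℝ} (hτ : τ ∈ Icc 0 L) (hg0 : 0 ≤ g)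
    (hg : g ≤ ρ) (h₀ : g ^ 2 + h ^ 2 ≤ ρ ^ 2 + τ ^ 2) (hL : g ^ 2 + h ^ 2 ≤ ρ ^ 2 + (τ - L) ^ 2) :
    ∃ t ∈ Icc 0 L, g ^ 2 + (τ + h - t) ^ 2 ≤ ρ ^ 2 := by
  obtain ⟨hτ0, hτL⟩ := hτ
  rcases lt_or_ge (τ + h) 0 with h0 | h0
  · exact ⟨0, ⟨le_rfl, hτ0.trans hτL⟩, by nlinarith⟩
  rcases le_or_gt (τ + h) L with h1 | h1
  · exact ⟨τ + h, ⟨h0, h1⟩, by nlinarith⟩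
  · exact ⟨L, ⟨hτ0.trans hτL, le_rfl⟩, by nlinarith⟩

theorem le_expansion_mul {lam R R' q : ℝ} (hlam0 : 0 ≤ lam) (hlam1 : lam < 1)
    (hR : (1 - lam) * R' ≤ (1 + lam) * R) (hq : q ≤ lam * R + 2 * (lam * R')) :
    q ≤ (3 + lam) / (1 - lam) * lam * R := by
  rw [div_mul_eq_mul_div, div_mul_eq_mul_div, le_div_iff₀ (by linarith)]
  nlinarith [mul_le_mul_of_nonneg_left hR (by positivity : (0 : ℝ) ≤ 2 * lam)]

section Capsule

variable {a b v x : EuclideanSpace ℝ (Fin d)} {r : ℝ}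

theorem capsuleSeg_eq_s6 (hv : ‖v‖ = 1) :
    capsuleSeg a b v x r = {u | dist u x ≤ ballRadius a b x r ∧
      dist (perpProj v u) (perpProj v x) ≤ cylRadius a b x r} := by
  have hP : ∀ u, dist (perpProj v u) (perpProj v x) = ‖(u - x) - ⟪u - x, v⟫_ℝ • v‖ := fun u => by
    rw [dist_eq_norm, ← map_sub, perpProj_apply]
  unfold capsuleSeg
  split_ifs with h
  · ext u
    rw [mem_closedBall, mem_ofPred_eq, ballRadius_eq_cylRadius h, cylRadius]
    refine ⟨fun hu => ⟨hu, ?_⟩, And.left⟩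
    rw [dist_eq_norm, ← map_sub]
    exact (norm_perpProj_le hv _).trans (dist_eq_norm u x ▸ hu)
  · ext u
    rw [mem_inter_iff, mem_ofPred_eq, mem_closedBall, mem_ofPred_eq, hP, cylRadius, ballRadius]
    exact and_comm

theorem mem_scaleAbout_iff {μ : ℝ} (hμ : μ ≠ 0) {C : Set (EuclideanSpace ℝ (Fin d))}
    {w : EuclideanSpace ℝ (Fin d)} :
    w ∈ scaleAbout x μ C ↔ AffineMap.homothety x μ⁻¹ w ∈ C := by
  constructor
  · rintro ⟨u, hu, rfl⟩
    rwa [← AffineMap.homothety_mul_apply, inv_mul_cancel₀ hμ, AffineMap.homothety_one,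
      AffineMap.id_apply]
  · intro hw
    refine ⟨_, hw, ?_⟩
    rw [← AffineMap.homothety_mul_apply, mul_inv_cancel₀ hμ, AffineMap.homothety_one,
      AffineMap.id_apply]

theorem mem_scaleAbout_capsuleSeg_iff (hv : ‖v‖ = 1) {μ : ℝ} (hμ : 0 < μ)
    {w : EuclideanSpace ℝ (Fin d)} :
    w ∈ scaleAbout x μ (capsuleSeg a b v x r) ↔ dist w x ≤ μ * ballRadius a b x r ∧
      dist (perpProj v w) (perpProj v x) ≤ μ * cylRadius a b x r := by
  have hP : dist (perpProj v (AffineMap.homothety x μ⁻¹ w)) (perpProj v x) =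
      μ⁻¹ * dist (perpProj v w) (perpProj v x) := by
    rw [AffineMap.homothety_apply, vsub_eq_sub, vadd_eq_add, dist_eq_norm, dist_eq_norm, ← map_sub,
      ← map_sub, add_sub_cancel_right, map_smul, norm_smul, Real.norm_of_nonneg (by positivity)]
  rw [mem_scaleAbout_iff hμ.ne', capsuleSeg_eq_s6 hv, mem_ofPred_eq, dist_homothety_center, hP,
    Real.norm_of_nonneg (by positivity), dist_comm, inv_mul_le_iff₀ hμ, inv_mul_le_iff₀ hμ]

theorem exists_norm_sub_smul_le_of_mem_capsuleSeg (hv : ‖v‖ = 1) (hdir : b - a = ‖b - a‖ • v)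
    (hx : infDist x (segment ℝ a b) ≠ min (dist x a) (dist x b)) {u : EuclideanSpace ℝ (Fin d)}
    (hu : u ∈ capsuleSeg a b v x r) :
    ∃ t ∈ Icc 0 ‖b - a‖, ‖u - x - (t - ⟪x - a, v⟫_ℝ) • v‖ ≤ cylRadius a b x r := by
  obtain ⟨hτ, hδ⟩ := inner_mem_Icc_of_infDist_ne_min hv hdir hx
  rw [capsuleSeg_eq_s6 hv] at hu
  obtain ⟨hR, hρ⟩ := hu
  rw [dist_eq_norm, ← map_sub] at hρ
  rw [dist_eq_norm] at hR
  have hδρ : ‖perpProj v (x - a)‖ ≤ cylRadius a b x r := hδ ▸ le_max_right _ _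
  have hr : r ≤ cylRadius a b x r := le_max_left _ _
  have hpyth := norm_perpProj_sq_add_inner_sq hv (u - x)
  have hend : ∀ c : ℝ, min (dist x a) (dist x b) ≤ dist x (a + c • v) →
      ‖u - x‖ ^ 2 ≤ cylRadius a b x r ^ 2 + (⟪x - a, v⟫_ℝ - c) ^ 2 := by
    intro c hc
    have hxc := dist_add_smul_sq hv x a c
    rcases le_max_iff.1 hR with h | h
    · nlinarith [norm_nonneg (u - x), sq_nonneg (⟪x - a, v⟫_ℝ - c)]
    · nlinarith [norm_nonneg (u - x), norm_nonneg (perpProj v (x - a))]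
  have h₀ := hend 0 (by rw [zero_smul, add_zero]; exact min_le_left _ _)
  have hL := hend ‖b - a‖ (by rw [← hdir, add_sub_cancel]; exact min_le_right _ _)
  rw [sub_zero] at h₀
  obtain ⟨t, ht, hle⟩ :=
    exists_mem_Icc_sq_add_sq_le hτ (norm_nonneg _) hρ (hpyth ▸ h₀) (hpyth ▸ hL)
  refine ⟨t, ht, ?_⟩
  refine pow_le_pow_iff_left₀ (norm_nonneg _) (cylRadius_nonneg a b x r) two_ne_zero |>.1 ?_
  calc ‖u - x - (t - ⟪x - a, v⟫_ℝ) • v‖ ^ 2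
      = ‖perpProj v (u - x)‖ ^ 2 + (⟪x - a, v⟫_ℝ + ⟪u - x, v⟫_ℝ - t) ^ 2 := by
        rw [norm_sub_smul_sq hv]
        ring
    _ ≤ cylRadius a b x r ^ 2 := hle

theorem infDist_le_of_mem_scaleAbout (hv : ‖v‖ = 1) (hdir : b - a = ‖b - a‖ • v) {lam : ℝ}
    (hlam0 : 0 ≤ lam) (hlam1 : lam ≤ 1) {z : EuclideanSpace ℝ (Fin d)}
    (hz : z ∈ scaleAbout x lam (capsuleSeg a b v x r)) :
    infDist z (segment ℝ a b) ≤ infDist x (segment ℝ a b) + lam * cylRadius a b x r := by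
  obtain ⟨u, hu, rfl⟩ := hz
  by_cases hx : infDist x (segment ℝ a b) = min (dist x a) (dist x b)
  · rw [capsuleSeg, if_pos hx, mem_closedBall] at hu
    calc infDist (AffineMap.homothety x lam u) (segment ℝ a b)
        ≤ infDist x (segment ℝ a b) + dist (AffineMap.homothety x lam u) x :=
          infDist_le_infDist_add_dist
      _ = infDist x (segment ℝ a b) + lam * dist u x := by
          rw [dist_homothety_center, Real.norm_of_nonneg hlam0, dist_comm]
      _ ≤ infDist x (segment ℝ a b) + lam * cylRadius a b x r := by
          gcongr
          exact hu
  · obtain ⟨hτ, hδ⟩ := inner_mem_Icc_of_infDist_ne_min hv hdir hx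
    obtain ⟨t, ht, hut⟩ := exists_norm_sub_smul_le_of_mem_capsuleSeg hv hdir hx hu
    -- The homothety moves the foot of `x` a fraction `lam` of the way towards `a + t • v`.
    have hmem : a + ((1 - lam) * ⟪x - a, v⟫_ℝ + lam * t) • v ∈ segment ℝ a b :=
      add_smul_mem_segment hdir (convex_Icc 0 _ hτ ht (by linarith) hlam0 (by ring))
    have hsplit : AffineMap.homothety x lam u - (a + ((1 - lam) * ⟪x - a, v⟫_ℝ + lam * t) • v) =
        perpProj v (x - a) + lam • (u - x - (t - ⟪x - a, v⟫_ℝ) • v) := by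
      rw [AffineMap.homothety_apply, vsub_eq_sub, vadd_eq_add, perpProj_apply]
      module
    calc infDist (AffineMap.homothety x lam u) (segment ℝ a b)
        ≤ ‖perpProj v (x - a) + lam • (u - x - (t - ⟪x - a, v⟫_ℝ) • v)‖ := by
          rw [← hsplit, ← dist_eq_norm]
          exact infDist_le_dist_of_mem hmem
      _ ≤ ‖perpProj v (x - a)‖ + lam * ‖u - x - (t - ⟪x - a, v⟫_ℝ) • v‖ :=
          (norm_add_le _ _).trans_eq (by rw [norm_smul, Real.norm_of_nonneg hlam0])
      _ ≤ infDist x (segment ℝ a b) + lam * cylRadius a b x r := by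
          rw [hδ]
          gcongr

variable {y z : EuclideanSpace ℝ (Fin d)} {lam : ℝ}

theorem infDist_le_of_mem_inter (hv : ‖v‖ = 1) (hdir : b - a = ‖b - a‖ • v) (hlam0 : 0 < lam)
    (hlam1 : lam ≤ 1) (hzx : z ∈ scaleAbout x lam (capsuleSeg a b v x r))
    (hzy : z ∈ scaleAbout y lam (capsuleSeg a b v y r)) :
    infDist y (segment ℝ a b) ≤
      infDist x (segment ℝ a b) + lam * cylRadius a b x r + lam * cylRadius a b y r := by
  have hzx' := (mem_scaleAbout_capsuleSeg_iff hv hlam0).1 hzx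
  obtain ⟨hzyR, hzyP⟩ := (mem_scaleAbout_capsuleSeg_iff hv hlam0).1 hzy
  by_cases hy : infDist y (segment ℝ a b) = min (dist y a) (dist y b)
  · rw [ballRadius_eq_cylRadius hy, dist_comm] at hzyR
    calc infDist y (segment ℝ a b) ≤ infDist z (segment ℝ a b) + dist y z :=
          infDist_le_infDist_add_dist
      _ ≤ infDist x (segment ℝ a b) + lam * cylRadius a b x r + lam * cylRadius a b y r :=
          add_le_add (infDist_le_of_mem_scaleAbout hv hdir hlam0.le hlam1 hzx) hzyR
  · obtain ⟨-, hδy⟩ := inner_mem_Icc_of_infDist_ne_min hv hdir hy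
    have hxa : dist (perpProj v x) (perpProj v a) ≤ infDist x (segment ℝ a b) := by
      rw [dist_eq_norm, ← map_sub]
      exact norm_perpProj_le_infDist_segment hv hdir x
    rw [dist_comm] at hzyP
    calc infDist y (segment ℝ a b) = dist (perpProj v y) (perpProj v a) := by
          rw [hδy, dist_eq_norm, map_sub]
      _ ≤ dist (perpProj v y) (perpProj v z) + dist (perpProj v z) (perpProj v x) +
          dist (perpProj v x) (perpProj v a) := dist_triangle4 _ _ _ _
      _ ≤ infDist x (segment ℝ a b) + lam * cylRadius a b x r + lam * cylRadius a b y r := by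
          linarith [hzx'.2]

theorem cylRadius_le_of_mem_inter (hv : ‖v‖ = 1) (hdir : b - a = ‖b - a‖ • v) (hlam0 : 0 < lam)
    (hlam1 : lam ≤ 1) (hzx : z ∈ scaleAbout x lam (capsuleSeg a b v x r))
    (hzy : z ∈ scaleAbout y lam (capsuleSeg a b v y r)) :
    (1 - lam) * cylRadius a b y r ≤ (1 + lam) * cylRadius a b x r := by
  have hδ := infDist_le_of_mem_inter hv hdir hlam0 hlam1 hzx hzy
  have hx := cylRadius_nonneg a b x r
  have hy := cylRadius_nonneg a b y r
  have hrx : r ≤ cylRadius a b x r := le_max_left _ _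
  have hδx : infDist x (segment ℝ a b) ≤ cylRadius a b x r := le_max_right _ _
  have : cylRadius a b y r ≤
      cylRadius a b x r + lam * cylRadius a b x r + lam * cylRadius a b y r :=
    max_le (by nlinarith) (by linarith)
  linarith

theorem ballRadius_le_of_mem_inter (hv : ‖v‖ = 1) (hlam0 : 0 < lam)
    (hzx : z ∈ scaleAbout x lam (capsuleSeg a b v x r))
    (hzy : z ∈ scaleAbout y lam (capsuleSeg a b v y r)) :
    (1 - lam) * ballRadius a b y r ≤ (1 + lam) * ballRadius a b x r := by
  have hzx' := ((mem_scaleAbout_capsuleSeg_iff hv hlam0).1 hzx).1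
  have hzy' := ((mem_scaleAbout_capsuleSeg_iff hv hlam0).1 hzy).1
  linarith [ballRadius_le_add_dist a b x y r, dist_triangle_left x y z]

end Capsule

theorem capsuleSeg_expansion_containment_general {d : ℕ}
    (a b v : EuclideanSpace ℝ (Fin d))
    (hv : ‖v‖ = 1)
    (hdir : b - a = ‖b - a‖ • v)
    (r : ℝ) (lam : ℝ) (hlam0 : 0 < lam) (hlam1 : lam < 1)
    (x y : EuclideanSpace ℝ (Fin d))
    (hmeet : (scaleAbout x lam (capsuleSeg a b v x r) ∩
        scaleAbout y lam (capsuleSeg a b v y r)).Nonempty) :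
    scaleAbout y lam (capsuleSeg a b v y r) ⊆
      scaleAbout x ((3 + lam) / (1 - lam) * lam) (capsuleSeg a b v x r) := by
  obtain ⟨z, hzx, hzy⟩ := hmeet
  have hball := ballRadius_le_of_mem_inter hv hlam0 hzx hzy
  have hcyl := cylRadius_le_of_mem_inter hv hdir hlam0 hlam1.le hzx hzy
  rw [mem_scaleAbout_capsuleSeg_iff hv hlam0] at hzx hzy
  intro w hw
  rw [mem_scaleAbout_capsuleSeg_iff hv hlam0] at hw
  rw [mem_scaleAbout_capsuleSeg_iff hv (mul_pos (div_pos (by linarith) (by linarith)) hlam0)]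
  constructor
  · refine le_expansion_mul hlam0.le hlam1 hball ((dist_triangle4 w y z x).trans ?_)
    linarith [hw.1, hzy.1, hzx.1, dist_comm y z]
  · refine le_expansion_mul hlam0.le hlam1 hcyl
      ((dist_triangle4 _ (perpProj v y) (perpProj v z) _).trans ?_)
    linarith [hw.2, hzy.2, hzx.2, dist_comm (perpProj v y) (perpProj v z)]

/-- **Single-segment Expansion-Containment.** For a single
segment `s = [a,b]`, if `C_s^λ(x, r)` and `C_s^λ(y, r)` overlap, then
`C_s^λ(y, r) ⊆ C_s^{αλ}(x, r)` with `α = (3+λ)/(1-λ)`. -/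
theorem capsuleSeg_expansion_containment {d : ℕ} (hd : 1 ≤ d)
    (a b v : EuclideanSpace ℝ (Fin d))
    (hab : a ≠ b)
    (hv : ‖v‖ = 1)
    (hdir : b - a = ‖b - a‖ • v)
    (r : ℝ) (hr : 0 < r) (lam : ℝ) (hlam0 : 0 < lam) (hlam1 : lam < 1)
    (x y : EuclideanSpace ℝ (Fin d))
    (hmeet : (scaleAbout x lam (capsuleSeg a b v x r) ∩
        scaleAbout y lam (capsuleSeg a b v y r)).Nonempty) :
    scaleAbout y lam (capsuleSeg a b v y r) ⊆
      scaleAbout x ((3 + lam) / (1 - lam) * lam) (capsuleSeg a b v x r) :=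
  capsuleSeg_expansion_containment_general a b v hv hdir r lam hlam0 hlam1 x y hmeet
end
end
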